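/- If B is a normalized Hölder potential (i.e. ∫_M e^{B(ax)} dν(a) = 1 for all x) with Hölder exponent α, then for every Hölder w and all n, |L_B^n(w)(x) − L_B^n(w)(y)| ≤ [C_{e^B}·‖w‖·(2^{-α}+...+2^{-nα}) + C_w·2^{-nα}]·d(x,y)^α, where C_{e^B}, C_w are the Hölder constants of e^B and w and ‖w‖ is the sup norm. -/
import Mathlib


open MeasureTheory Filter Topology

noncomputable section

/-- Concatenation `ax` of a symbol `a ∈ M` with a sequence `x ∈ M^ℕ`. -/
def pcons {M : Type*} (a : M) (x : ℕ → M) : ℕ → M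
  | 0 => a
  | n + 1 => x n

/-- The left shift on `M^ℕ`. -/
def shiftMap {M : Type*} (x : ℕ → M) : ℕ → M := fun n => x (n + 1)

/-- The metric `d(x,y) = ∑_{n ≥ 1} 2^{-n} d_M(x_n, y_n)` on `M^ℕ`
(coordinates indexed from 0, so coordinate `n` has weight `2^{-(n+1)}`). -/
def dB {M : Type*} [MetricSpace M] (x y : ℕ → M) : ℝ :=
  ∑' n : ℕ, (1 / 2 : ℝ) ^ (n + 1) * dist (x n) (y n)

/-- `f : M^ℕ → ℝ` is `α`-Hölder with constant `C` (w.r.t. the metric `dB`). -/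
def HolderFWith {M : Type*} [MetricSpace M] (C α : ℝ) (f : (ℕ → M) → ℝ) : Prop :=
  Continuous f ∧ ∀ x y, |f x - f y| ≤ C * dB x y ^ α

/-- `f : M^ℕ → ℝ` is `α`-Hölder continuous. -/
def HolderF {M : Type*} [MetricSpace M] (α : ℝ) (f : (ℕ → M) → ℝ) : Prop :=
  ∃ C, 0 ≤ C ∧ HolderFWith C α f

/-- The Ruelle (transfer) operator with a-priori measure `ν` and potential `A`:
`L_A(φ)(x) = ∫_M e^{A(ax)} φ(ax) dν(a)`. -/
def Ruelle {M : Type*} [MetricSpace M] [MeasurableSpace M] (ν : Measure M)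
    (A : (ℕ → M) → ℝ) (φ : (ℕ → M) → ℝ) : (ℕ → M) → ℝ :=
  fun x => ∫ a, Real.exp (A (pcons a x)) * φ (pcons a x) ∂ν

lemma continuous_pcons {M : Type*} [MetricSpace M] :
    Continuous fun p : M × (ℕ → M) => pcons p.1 p.2 := by
  apply continuous_pi
  intro n
  cases n with
  | zero => exact continuous_fst
  | succ n => exact (continuous_apply n).comp continuous_snd

lemma summable_dB {M : Type*} [MetricSpace M] [CompactSpace M] (x y : ℕ → M) :
    Summable fun n : ℕ => (1 / 2 : ℝ) ^ (n + 1) * dist (x n) (y n) := by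
  obtain ⟨D, hD⟩ := Metric.isBounded_iff.mp (isCompact_univ (X := M)).isBounded
  refine Summable.of_nonneg_of_le (fun n => by positivity) (fun n => ?_)
    ((summable_geometric_of_lt_one (by norm_num) (by norm_num : (1/2:ℝ) < 1)).mul_right D)
  · have h1 : ((1:ℝ)/2) ^ (n+1) ≤ (1/2) ^ n :=
      pow_le_pow_of_le_one (by norm_num) (by norm_num) (Nat.le_succ n)
    have h2 : dist (x n) (y n) ≤ D := hD trivial trivial
    exact mul_le_mul h1 h2 dist_nonneg (by positivity)

lemma dB_nonneg {M : Type*} [MetricSpace M] (x y : ℕ → M) : 0 ≤ dB x y :=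
  tsum_nonneg fun n => by positivity

lemma dB_pcons {M : Type*} [MetricSpace M] [CompactSpace M] (a : M) (x y : ℕ → M) :
    dB (pcons a x) (pcons a y) = (1 / 2) * dB x y := by
  have hs := summable_dB (pcons a x) (pcons a y)
  rw [dB, Summable.tsum_eq_zero_add hs]
  have h0 : (1 / 2 : ℝ) ^ (0 + 1) * dist (pcons a x 0) (pcons a y 0) = 0 := by
    simp [pcons]
  rw [h0, zero_add]
  have h1 : ∀ n : ℕ, (1 / 2 : ℝ) ^ (n + 1 + 1) * dist (pcons a x (n + 1)) (pcons a y (n + 1))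
      = (1 / 2 : ℝ) * ((1 / 2 : ℝ) ^ (n + 1) * dist (x n) (y n)) := by
    intro n; simp only [pcons]; ring
  rw [tsum_congr h1, tsum_mul_left]
  rfl

lemma integrable_cont {M : Type*} [MetricSpace M] [CompactSpace M] [MeasurableSpace M]
    [BorelSpace M] (ν : Measure M) [IsProbabilityMeasure ν] (f : M → ℝ) (hf : Continuous f) :
    Integrable f ν :=
  hf.integrable_of_hasCompactSupport
    (IsCompact.of_isClosed_subset isCompact_univ (isClosed_tsupport f) (Set.subset_univ _))

lemma continuous_pcons_left {M : Type*} [MetricSpace M] (x : ℕ → M) :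
    Continuous fun a : M => pcons a x :=
  continuous_pcons.comp (continuous_id.prodMk continuous_const)

lemma continuous_pcons_right {M : Type*} [MetricSpace M] (a : M) :
    Continuous fun x : ℕ → M => pcons a x :=
  continuous_pcons.comp (continuous_const.prodMk continuous_id)

lemma ruelle_continuous {M : Type*} [MetricSpace M] [CompactSpace M] [Nonempty M]
    [MeasurableSpace M] [BorelSpace M] (ν : Measure M) [IsProbabilityMeasure ν]
    (B φ : (ℕ → M) → ℝ) (hBc : Continuous B) (hφ : Continuous φ) :
    Continuous (Ruelle ν B φ) := by
  set g : (ℕ → M) → ℝ := fun z => Real.exp (B z) * φ z with hgdef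
  have hgc : Continuous g := (Real.continuous_exp.comp hBc).mul hφ
  obtain ⟨z1, -, h1⟩ := (isCompact_univ (X := ℕ → M)).exists_isMaxOn Set.univ_nonempty
    (continuous_abs.comp hgc).continuousOn
  have heq : Ruelle ν B φ = fun x => ∫ a, g (pcons a x) ∂ν := rfl
  rw [heq]
  apply continuous_of_dominated (bound := fun _ => |g z1|)
  · intro x
    exact (hgc.comp (continuous_pcons_left x)).aestronglyMeasurable
  · intro x
    filter_upwards with a
    simpa [Real.norm_eq_abs] using h1 (Set.mem_univ (pcons a x))
  · exact integrable_const _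
  · filter_upwards with a
    exact hgc.comp (continuous_pcons_right a)

lemma ruelle_bound {M : Type*} [MetricSpace M] [CompactSpace M] [Nonempty M]
    [MeasurableSpace M] [BorelSpace M] (ν : Measure M) [IsProbabilityMeasure ν]
    (B φ : (ℕ → M) → ℝ) (hBc : Continuous B) (hφ : Continuous φ)
    (hnorm : ∀ x : ℕ → M, ∫ a, Real.exp (B (pcons a x)) ∂ν = 1)
    (S : ℝ) (hφS : ∀ z, |φ z| ≤ S) (x : ℕ → M) :
    |Ruelle ν B φ x| ≤ S := by
  have hgc : Continuous fun a : M => Real.exp (B (pcons a x)) * φ (pcons a x) :=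
    ((Real.continuous_exp.comp hBc).mul hφ).comp (continuous_pcons_left x)
  have hint : Integrable (fun a : M => Real.exp (B (pcons a x)) * φ (pcons a x)) ν :=
    integrable_cont ν _ hgc
  have hintE : Integrable (fun a : M => Real.exp (B (pcons a x)) * S) ν :=
    integrable_cont ν _ (((Real.continuous_exp.comp hBc).comp (continuous_pcons_left x)).mul
      continuous_const)
  calc |Ruelle ν B φ x| ≤ ∫ a, Real.exp (B (pcons a x)) * |φ (pcons a x)| ∂ν := by
        simpa [Real.norm_eq_abs, abs_mul, abs_of_pos (Real.exp_pos _), Ruelle] using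
          norm_integral_le_integral_norm (μ := ν)
            (fun a : M => Real.exp (B (pcons a x)) * φ (pcons a x))
    _ ≤ ∫ a, Real.exp (B (pcons a x)) * S ∂ν := by
        apply integral_mono (integrable_cont ν _
          (((Real.continuous_exp.comp hBc).comp (continuous_pcons_left x)).mul
            (continuous_abs.comp (hφ.comp (continuous_pcons_left x))))) hintE
        intro a
        exact mul_le_mul_of_nonneg_left (hφS _) (Real.exp_pos _).le
    _ = S := by rw [integral_mul_const, hnorm x, one_mul]

theorem iterates_holder_estimate {M : Type*} [MetricSpace M] [CompactSpace M] [Nonempty M]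
    [MeasurableSpace M] [BorelSpace M]
    (ν : Measure M) [IsProbabilityMeasure ν]
    (hsupp : ∀ U : Set M, IsOpen U → U.Nonempty → 0 < ν U)
    {α : ℝ} (hα : 0 < α)
    (B : (ℕ → M) → ℝ) (hB : HolderF α B)
    (hnorm : ∀ x : ℕ → M, ∫ a, Real.exp (B (pcons a x)) ∂ν = 1)
    (Ce : ℝ) (hCe : HolderFWith Ce α (fun x => Real.exp (B x)))
    (w : (ℕ → M) → ℝ) (Cw : ℝ) (hw : HolderFWith Cw α w) :
    ∀ (n : ℕ) (x y : ℕ → M),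
      |(Ruelle ν B)^[n] w x - (Ruelle ν B)^[n] w y| ≤
        (Ce * (⨆ z : ℕ → M, |w z|) *
            (∑ i ∈ Finset.range n, ((1 / 2 : ℝ) ^ α) ^ (i + 1)) +
          Cw * ((1 / 2 : ℝ) ^ α) ^ n) * dB x y ^ α := by
  obtain ⟨CB, -, hBc, -⟩ := hB
  intro n x y
  set S : ℝ := ⨆ z : ℕ → M, |w z| with hSdef
  set θ : ℝ := (1 / 2 : ℝ) ^ α with hθdef
  by_cases hsub : ∀ a b : M, a = b
  · have hxy : x = y := funext fun i => hsub _ _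
    subst hxy
    have h0 : dB x x = 0 := by simp [dB]
    rw [sub_self, abs_zero, h0, Real.zero_rpow hα.ne', mul_zero]
  push_neg at hsub
  obtain ⟨a0, b0, hab⟩ := hsub
  -- positivity of dB on a pair of distinct constant sequences
  have hdpos : 0 < dB (fun _ : ℕ => a0) (fun _ => b0) := by
    have hs := summable_dB (fun _ : ℕ => a0) (fun _ => b0)
    have hd : (0 : ℝ) < dist a0 b0 := dist_pos.mpr hab
    have h0 : (0 : ℝ) < (1 / 2 : ℝ) ^ (0 + 1) * dist a0 b0 := by positivity
    exact lt_of_lt_of_le h0 (Summable.le_tsum hs 0 fun j _ => by positivity)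
  have hrp : 0 < dB (fun _ : ℕ => a0) (fun _ => b0) ^ α := Real.rpow_pos_of_pos hdpos α
  have hCe0 : 0 ≤ Ce := by
    have h := (abs_nonneg _).trans (hCe.2 (fun _ => a0) (fun _ => b0))
    nlinarith
  have hCw0 : 0 ≤ Cw := by
    have h := (abs_nonneg _).trans (hw.2 (fun _ => a0) (fun _ => b0))
    nlinarith
  have hθ0 : 0 < θ := Real.rpow_pos_of_pos (by norm_num) α
  -- sup-norm bounds for w
  obtain ⟨z0, -, hz0⟩ := (isCompact_univ (X := ℕ → M)).exists_isMaxOn Set.univ_nonempty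
    (continuous_abs.comp hw.1).continuousOn
  have hbdd : BddAbove (Set.range fun z : ℕ → M => |w z|) :=
    ⟨|w z0|, by rintro _ ⟨z, rfl⟩; exact hz0 (Set.mem_univ z)⟩
  have hS : ∀ z, |w z| ≤ S := fun z => le_ciSup hbdd z
  have main : ∀ m : ℕ, Continuous ((Ruelle ν B)^[m] w) ∧
      (∀ z, |(Ruelle ν B)^[m] w z| ≤ S) ∧
      ∀ u v : ℕ → M, |(Ruelle ν B)^[m] w u - (Ruelle ν B)^[m] w v| ≤
        (Ce * S * (∑ i ∈ Finset.range m, θ ^ (i + 1)) + Cw * θ ^ m) * dB u v ^ α := by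
    intro m
    induction m with
    | zero =>
      refine ⟨hw.1, hS, fun u v => ?_⟩
      simpa using hw.2 u v
    | succ m ih =>
      obtain ⟨ihc, ihb, ihh⟩ := ih
      set φ : (ℕ → M) → ℝ := (Ruelle ν B)^[m] w with hφdef
      have hiter : (Ruelle ν B)^[m + 1] w = Ruelle ν B φ := Function.iterate_succ_apply' _ m w
      rw [hiter]
      refine ⟨ruelle_continuous ν B φ hBc ihc,
        fun z => ruelle_bound ν B φ hBc ihc hnorm S ihb z, ?_⟩
      intro u v
      have hdα : 0 ≤ dB u v ^ α := Real.rpow_nonneg (dB_nonneg u v) α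
      have hθd : ∀ a : M, dB (pcons a u) (pcons a v) ^ α = θ * dB u v ^ α := by
        intro a
        rw [dB_pcons, Real.mul_rpow (by norm_num) (dB_nonneg u v), ← hθdef]
      set Km : ℝ := Ce * S * (∑ i ∈ Finset.range m, θ ^ (i + 1)) + Cw * θ ^ m with hKmdef
      -- pointwise estimate
      have hpt : ∀ a : M,
          |Real.exp (B (pcons a u)) * φ (pcons a u) -
            Real.exp (B (pcons a v)) * φ (pcons a v)| ≤
          Ce * S * (θ * dB u v ^ α) +
            Real.exp (B (pcons a v)) * (Km * (θ * dB u v ^ α)) := by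
        intro a
        have e2 : (0 : ℝ) < Real.exp (B (pcons a v)) := Real.exp_pos _
        have key : Real.exp (B (pcons a u)) * φ (pcons a u) -
              Real.exp (B (pcons a v)) * φ (pcons a v)
            = (Real.exp (B (pcons a u)) - Real.exp (B (pcons a v))) * φ (pcons a u)
              + Real.exp (B (pcons a v)) * (φ (pcons a u) - φ (pcons a v)) := by ring
        rw [key]
        refine (abs_add_le _ _).trans ?_
        rw [abs_mul, abs_mul, abs_of_pos e2]
        apply add_le_add
        · have h1 : |Real.exp (B (pcons a u)) - Real.exp (B (pcons a v))| ≤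
              Ce * (θ * dB u v ^ α) := by
            have h := hCe.2 (pcons a u) (pcons a v)
            rw [hθd a] at h
            exact h
          calc |Real.exp (B (pcons a u)) - Real.exp (B (pcons a v))| * |φ (pcons a u)|
              ≤ Ce * (θ * dB u v ^ α) * S :=
                mul_le_mul h1 (ihb _) (abs_nonneg _)
                  (mul_nonneg hCe0 (mul_nonneg hθ0.le hdα))
            _ = Ce * S * (θ * dB u v ^ α) := by ring
        · refine mul_le_mul_of_nonneg_left ?_ e2.le
          have h := ihh (pcons a u) (pcons a v)
          rw [hθd a] at h
          exact h
      -- integrability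
      have hcu : Continuous fun a : M => Real.exp (B (pcons a u)) * φ (pcons a u) :=
        ((Real.continuous_exp.comp hBc).mul ihc).comp (continuous_pcons_left u)
      have hcv : Continuous fun a : M => Real.exp (B (pcons a v)) * φ (pcons a v) :=
        ((Real.continuous_exp.comp hBc).mul ihc).comp (continuous_pcons_left v)
      have hintu := integrable_cont ν _ hcu
      have hintv := integrable_cont ν _ hcv
      have hintE2 : Integrable
          (fun a : M => Real.exp (B (pcons a v)) * (Km * (θ * dB u v ^ α))) ν :=
        integrable_cont ν _
          (((Real.continuous_exp.comp hBc).comp (continuous_pcons_left v)).mul continuous_const)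
      have hsum : ∑ i ∈ Finset.range (m + 1), θ ^ (i + 1)
          = θ * (∑ i ∈ Finset.range m, θ ^ (i + 1)) + θ := by
        rw [Finset.sum_range_succ' (fun i => θ ^ (i + 1)) m, Finset.mul_sum]
        congr 1
        · exact Finset.sum_congr rfl fun i _ => by ring
        · exact pow_one θ
      calc |Ruelle ν B φ u - Ruelle ν B φ v|
          = |∫ a, (Real.exp (B (pcons a u)) * φ (pcons a u) -
              Real.exp (B (pcons a v)) * φ (pcons a v)) ∂ν| := by
            rw [integral_sub hintu hintv]; rfl
        _ ≤ ∫ a, |Real.exp (B (pcons a u)) * φ (pcons a u) -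
              Real.exp (B (pcons a v)) * φ (pcons a v)| ∂ν := by
            simpa [Real.norm_eq_abs] using
              norm_integral_le_integral_norm (μ := ν)
                (fun a : M => Real.exp (B (pcons a u)) * φ (pcons a u) -
                  Real.exp (B (pcons a v)) * φ (pcons a v))
        _ ≤ ∫ a, (Ce * S * (θ * dB u v ^ α) +
              Real.exp (B (pcons a v)) * (Km * (θ * dB u v ^ α))) ∂ν :=
            integral_mono (hintu.sub hintv).abs
              ((integrable_const _).add hintE2) hpt
        _ = Ce * S * (θ * dB u v ^ α) + Km * (θ * dB u v ^ α) := by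
            rw [integral_add (integrable_const _) hintE2, integral_const,
              integral_mul_const, hnorm v, one_mul]
            simp
        _ = (Ce * S * (∑ i ∈ Finset.range (m + 1), θ ^ (i + 1)) + Cw * θ ^ (m + 1))
              * dB u v ^ α := by
            rw [hsum, hKmdef]; ring
  exact (main n).2.2 x y
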